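/- Every Fractran program P gives rise to a Collatz-type function: letting d be the lcm of the denominators of P, there exist rationals a₀,…,a_{d−1}, b₀,…,b_{d−1} such that the total function f'_P (defined as f_P extended by f'_P(n)=1 when f_P(n) is undefined) satisfies f'_P(n) = a_r·n + b_r whenever n ≡ r (mod d), for all positive integers n, with f'_P(n) ∈ ℕ⁺ always; moreover for each residue r either b_r = 0, or a_r = 0 and b_r = 1. -/

import Mathlib

/-- One step of a Fractran program `P` on input `n`: multiply `n` by the first
fraction in the list whose product with `n` is an integer; `none` if no such fraction. -/
def fracStep (P : List ℚ) (n : ℕ) : Option ℕ :=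
  ((P.map (fun q => (n : ℚ) * q)).find? (fun x => x.den == 1)).map (fun x => x.num.toNat)

/-- `i`-fold iteration of the partial Fractran step function. -/
def fracIter (P : List ℚ) : ℕ → ℕ → Option ℕ
  | 0, n => some n
  | i + 1, n => (fracStep P n).bind (fracIter P i)

/-- `d`: the least common multiple of the denominators of the program. -/
def fracD (P : List ℚ) : ℕ := (P.map (fun q => q.den)).foldr Nat.lcm 1

/-- `a'_n = a_i · (d / b_i)` for the first fraction `a_i/b_i` of `P` such that
`n · a_i/b_i` is an integer; `none` if no such fraction exists. -/
def fracA' (P : List ℚ) (n : ℕ) : Option ℕ :=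
  (P.find? (fun q => ((n : ℚ) * q).den == 1)).map (fun q => q.num.toNat * (fracD P / q.den))

/-- `o_n = n · a_i/b_i` for the first fraction `a_i/b_i` of `P` such that
`n · a_i/b_i` is an integer; `none` if no such fraction exists. -/
def fracO (P : List ℚ) (n : ℕ) : Option ℕ :=
  (P.find? (fun q => ((n : ℚ) * q).den == 1)).map (fun q => ((n : ℚ) * q).num.toNat)

/-- `φ(n)`: the unique element of `{1, …, d}` congruent to `n` modulo `d`. -/
def phi (d n : ℕ) : ℕ := (n - 1) % d + 1

/-! Whether `n · q` is an integer depends only on whether `den q ∣ n`, hence only on `n` modulo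
the lcm `d` of the denominators. So the fraction `q_r` that fires at `n` is determined by the
residue `r` of `n`, and then `f'_P(n) = q_r · n`; when no fraction fires, `f'_P(n) = 1`. -/

theorem Rat.den_natCast_mul_eq_one_iff (n : ℕ) (q : ℚ) : ((n : ℚ) * q).den = 1 ↔ q.den ∣ n := by
  have hq : (n : ℚ) * q = ((n * q.num : ℤ) : ℚ) / ((q.den : ℤ) : ℚ) := by
    push_cast
    rw [mul_div_assoc, Rat.num_div_den]
  rw [hq, Rat.den_div_intCast_eq_one_iff _ _ (by exact_mod_cast q.den_ne_zero),
    ← Int.natCast_dvd_natCast]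
  exact ⟨q.isCoprime_num_den.symm.dvd_of_dvd_mul_right, fun h => h.mul_right _⟩

theorem Rat.natCast_toNat_num_of_den_eq_one {x : ℚ} (hx : 0 ≤ x) (hden : x.den = 1) :
    ((x.num.toNat : ℕ) : ℚ) = x := by
  rw [← Int.cast_natCast, Int.toNat_of_nonneg (Rat.num_nonneg.mpr hx),
    (Rat.den_eq_one_iff x).mp hden]

theorem den_dvd_fracD {P : List ℚ} {q : ℚ} (hq : q ∈ P) : q.den ∣ fracD P := by
  rw [fracD, ← Multiset.coe_fold_r]
  exact Multiset.dvd_lcm (Multiset.mem_coe.mpr (List.mem_map_of_mem hq))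

def firstApplicable (P : List ℚ) (n : ℕ) : Option ℚ :=
  P.find? fun q => ((n : ℚ) * q).den == 1

theorem firstApplicable_mod_fracD (P : List ℚ) (n : ℕ) :
    firstApplicable P (n % fracD P) = firstApplicable P n :=
  List.find?_congr fun q hq => by
    simp [Rat.den_natCast_mul_eq_one_iff, Nat.dvd_mod_iff (den_dvd_fracD hq)]

theorem fracStep_eq_map_firstApplicable (P : List ℚ) (n : ℕ) :
    fracStep P n = (firstApplicable P n).map fun q => ((n : ℚ) * q).num.toNat := by
  rw [fracStep, List.find?_map, Option.map_map]
  rfl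

theorem fracStep_getD_eq {P : List ℚ} (hnonneg : ∀ q ∈ P, 0 ≤ q) (n : ℕ) :
    ((fracStep P n).getD 1 : ℚ) = ((firstApplicable P n).map ((n : ℚ) * ·)).getD 1 := by
  rw [fracStep_eq_map_firstApplicable]
  cases h : firstApplicable P n with
  | none => simp
  | some q =>
    have hq : 0 ≤ q := hnonneg q (List.mem_of_find?_eq_some h)
    have hden : ((n : ℚ) * q).den = 1 := by simpa using List.find?_some h
    simpa using Rat.natCast_toNat_num_of_den_eq_one (by positivity) hden

/-- Every Fractran program is a Collatz-type function: with `d` the lcm of the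
denominators, there are rationals `a_r`, `b_r` (indexed by residues `r < d`) such
that the totalized step function `f'_P(n) = f_P(n)` (`:= 1` when undefined)
satisfies `f'_P(n) = a_r·n + b_r` for `n ≡ r (mod d)`, always yields a positive
integer, and for each residue `r` either `b_r = 0`, or `a_r = 0 ∧ b_r = 1`. -/
theorem fractran_is_collatz_function (P : List ℚ) (hpos : ∀ q ∈ P, 0 < q) :
    ∃ a b : ℕ → ℚ,
      (∀ r < fracD P, b r = 0 ∨ (a r = 0 ∧ b r = 1)) ∧
      (∀ n : ℕ, 0 < n →
        (((fracStep P n).getD 1 : ℚ) = a (n % fracD P) * n + b (n % fracD P)) ∧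
        0 < (fracStep P n).getD 1) := by
  refine ⟨fun r => (firstApplicable P r).getD 0,
    fun r => if (firstApplicable P r).isSome then 0 else 1, fun r _ => ?_, fun n hn => ?_⟩
  · cases h : firstApplicable P r <;> simp [h]
  · have hval := fracStep_getD_eq (fun q hq => (hpos q hq).le) n
    simp only [firstApplicable_mod_fracD]
    cases h : firstApplicable P n with
    | none => simp_all
    | some q =>
      have hq : 0 < q := hpos q (List.mem_of_find?_eq_some h)
      simp only [h, Option.map_some, Option.getD_some, Option.isSome_some, if_true] at hval ⊢
      refine ⟨by rw [hval]; ring, ?_⟩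
      exact_mod_cast hval ▸ (by positivity : (0 : ℚ) < n * q)
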